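/- Consider the spatially homogeneous polarized Gowdy metric ds² = e^{2a}(-dt² + dx²) + t(e^W dy² + e^{-W} dz²) with W(t) = γ + β log t and a(t) = ζ + (1/4)(β²-1) log t. Along any future-directed causal geodesic with affine parameter τ, the t-component satisfies d/dt [ log (dt/dτ)^{-1} ] > -1/t, and consequently τ(t) > τ(t₀) + C log(t/t₀) for some C > 0; in particular τ → ∞ as t → ∞, so every inextendible future-directed causal geodesic is future complete. -/

import Mathlib

open Real Set Filter

/-- Metric coefficient `g₀₀ = -e^{2a}` of the homogeneous polarized Gowdy metric. -/
noncomputable def g00 (β ζ : ℝ) (t : ℝ) : ℝ :=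
  -Real.exp (2 * (ζ + (1 / 4) * (β ^ 2 - 1) * Real.log t))

/-- Metric coefficient `g₁₁ = e^{2a}`. -/
noncomputable def g11 (β ζ : ℝ) (t : ℝ) : ℝ :=
  Real.exp (2 * (ζ + (1 / 4) * (β ^ 2 - 1) * Real.log t))

/-- Metric coefficient `g₂₂ = t e^{W}` with `W = γ + β log t`. -/
noncomputable def g22 (β γ : ℝ) (t : ℝ) : ℝ :=
  t * Real.exp (γ + β * Real.log t)

/-- Metric coefficient `g₃₃ = t e^{-W}`. -/
noncomputable def g33 (β γ : ℝ) (t : ℝ) : ℝ :=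
  t * Real.exp (-(γ + β * Real.log t))

/-- `a_t = (1/4)(β²-1)/t`, the only nonvanishing derivative entering
`Γ⁰₀₀ = Γ⁰₁₁ = Γ¹₀₁ = a_t` in the homogeneous model. -/
noncomputable def at' (β : ℝ) (t : ℝ) : ℝ := (1 / 4) * (β ^ 2 - 1) / t

lemma hasDerivAt_g22 (β γ : ℝ) {t : ℝ} (ht : 0 < t) :
    HasDerivAt (g22 β γ) ((1 + β) * Real.exp (γ + β * Real.log t)) t := by
  have hlog : HasDerivAt Real.log t⁻¹ t := Real.hasDerivAt_log ht.ne'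
  have h1 : HasDerivAt (fun s => γ + β * Real.log s) (β * t⁻¹) t :=
    (hlog.const_mul β).const_add γ
  have h3 : HasDerivAt (g22 β γ) _ t :=
    (hasDerivAt_id' t).mul h1.exp
  convert h3 using 1
  field_simp

lemma hasDerivAt_g33 (β γ : ℝ) {t : ℝ} (ht : 0 < t) :
    HasDerivAt (g33 β γ) ((1 - β) * Real.exp (-(γ + β * Real.log t))) t := by
  have hlog : HasDerivAt Real.log t⁻¹ t := Real.hasDerivAt_log ht.ne'
  have h1 : HasDerivAt (fun s => -(γ + β * Real.log s)) (-(β * t⁻¹)) t :=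
    ((hlog.const_mul β).const_add γ).neg
  have h3 : HasDerivAt (g33 β γ) _ t :=
    (hasDerivAt_id' t).mul h1.exp
  convert h3 using 1
  field_simp
  ring

set_option maxHeartbeats 1000000 in
/-- Future geodesic completeness of spatially homogeneous polarized Gowdy models:
along any future-directed causal geodesic `(T,X,Y,Z)` one has
`d/dt log (dt/dτ)⁻¹ > -1/t`, hence `τ(t) > τ(t₀) + C log(t/t₀)`, and the affine
parameter cannot exhaust at a finite value `b` while `t → ∞`. -/
theorem homogeneous_gowdy_future_complete
    (β γ ζ t₀ b : ℝ) (ht₀ : 0 < t₀) (hb : 0 < b)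
    (T X Y Z : ℝ → ℝ) (ε : ℝ) (hε : ε = 0 ∨ ε = 1)
    (hT : ContDiff ℝ 2 T) (hX : ContDiff ℝ 2 X)
    (hY : ContDiff ℝ 2 Y) (hZ : ContDiff ℝ 2 Z)
    (hrange : ∀ τ ∈ Ico (0:ℝ) b, t₀ ≤ T τ)
    (hfuture : ∀ τ ∈ Ico (0:ℝ) b, 0 < deriv T τ)
    -- the four components of the geodesic equation:
    (hgeo0 : ∀ τ ∈ Ico (0:ℝ) b,
      deriv (deriv T) τ + at' β (T τ) * (deriv T τ) ^ 2
        + at' β (T τ) * (deriv X τ) ^ 2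
        + (-(1 / 2) * (g00 β ζ (T τ))⁻¹ * deriv (g22 β γ) (T τ)) * (deriv Y τ) ^ 2
        + (-(1 / 2) * (g00 β ζ (T τ))⁻¹ * deriv (g33 β γ) (T τ)) * (deriv Z τ) ^ 2
        = 0)
    (hgeo1 : ∀ τ ∈ Ico (0:ℝ) b,
      deriv (deriv X) τ + 2 * at' β (T τ) * deriv T τ * deriv X τ = 0)
    (hgeo2 : ∀ τ ∈ Ico (0:ℝ) b,
      deriv (deriv Y) τ
        + 2 * ((1 / 2) * (1 / T τ + β / T τ)) * deriv T τ * deriv Y τ = 0)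
    (hgeo3 : ∀ τ ∈ Ico (0:ℝ) b,
      deriv (deriv Z) τ
        + 2 * ((1 / 2) * (1 / T τ - β / T τ)) * deriv T τ * deriv Z τ = 0)
    -- normalization of the causal tangent vector:
    (hnorm : ∀ τ ∈ Ico (0:ℝ) b,
      g00 β ζ (T τ) * (deriv T τ) ^ 2 + g11 β ζ (T τ) * (deriv X τ) ^ 2
        + g22 β γ (T τ) * (deriv Y τ) ^ 2 + g33 β γ (T τ) * (deriv Z τ) ^ 2
        = -ε) :
    (∀ τ ∈ Ico (0:ℝ) b,
      deriv (fun σ => Real.log ((deriv T σ)⁻¹)) τ / deriv T τ > -(1 / T τ)) ∧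
    (∃ C : ℝ, 0 < C ∧ ∀ τ₁ ∈ Ico (0:ℝ) b, ∀ τ₂ ∈ Ico (0:ℝ) b, τ₁ < τ₂ →
      τ₂ > τ₁ + C * Real.log (T τ₂ / T τ₁)) ∧
    ¬ Tendsto T (nhdsWithin b (Iio b)) atTop := by
  have hεnn : 0 ≤ ε := by rcases hε with h | h <;> simp [h]
  have hTdiff : Differentiable ℝ T := hT.differentiable (by norm_num)
  have hT1 : ContDiff ℝ 1 (deriv T) := by
    have h2 : (2 : WithTop ℕ∞) = 1 + 1 := by norm_num
    rw [h2] at hT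
    exact (contDiff_succ_iff_deriv.mp hT).2.2
  have hT'diff : Differentiable ℝ (deriv T) := hT1.differentiable (by norm_num)
  -- the key pointwise bound: T'' < (T')²/T on [0,b)
  have key : ∀ τ ∈ Ico (0:ℝ) b, deriv (deriv T) τ < (deriv T τ) ^ 2 / T τ := by
    intro τ hτ
    have htpos : 0 < T τ := lt_of_lt_of_le ht₀ (hrange τ hτ)
    have hu : 0 < deriv T τ := hfuture τ hτ
    set t : ℝ := T τ with htdef
    set u : ℝ := deriv T τ
    set v : ℝ := deriv X τ
    set y : ℝ := deriv Y τ
    set z : ℝ := deriv Z τ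
    set w : ℝ := deriv (deriv T) τ
    set E : ℝ := Real.exp (2 * (ζ + (1 / 4) * (β ^ 2 - 1) * Real.log t)) with hEdef
    set G : ℝ := Real.exp (γ + β * Real.log t) with hGdef
    set H : ℝ := Real.exp (-(γ + β * Real.log t)) with hHdef
    have hE : 0 < E := Real.exp_pos _
    have hG : 0 < G := Real.exp_pos _
    have hH : 0 < H := Real.exp_pos _
    have hGH : G * H = 1 := by
      rw [hGdef, hHdef, ← Real.exp_add,
        show γ + β * Real.log t + -(γ + β * Real.log t) = 0 by ring, Real.exp_zero]
    have geo := hgeo0 τ hτ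
    have nor := hnorm τ hτ
    rw [(hasDerivAt_g22 β γ htpos).deriv, (hasDerivAt_g33 β γ htpos).deriv] at geo
    simp only [g00, g11, g22, g33, at', ← htdef, ← hEdef, ← hGdef, ← hHdef] at geo nor
    have nor' : -E * u ^ 2 + E * v ^ 2 + t * G * y ^ 2 + t * H * z ^ 2 = -ε := by
      linarith [nor]
    have hsub : E * u ^ 2 = E * v ^ 2 + t * G * y ^ 2 + t * H * z ^ 2 + ε := by
      linarith [nor']
    have geo' : w = -((1 / 4) * (β ^ 2 - 1) / t * u ^ 2
        + (1 / 4) * (β ^ 2 - 1) / t * v ^ 2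
        + (1 / 2) * E⁻¹ * ((1 + β) * G) * y ^ 2
        + (1 / 2) * E⁻¹ * ((1 - β) * H) * z ^ 2) := by
      rw [inv_neg] at geo
      linarith [geo]
    have h1 : 4 * t * E * w + E * (β ^ 2 - 1) * (u ^ 2 + v ^ 2)
        + 2 * t * (1 + β) * G * y ^ 2 + 2 * t * (1 - β) * H * z ^ 2 = 0 := by
      rw [geo']
      field_simp
      ring
    have hmain : 4 * E * (u ^ 2 - t * w)
        = E * (2 * β ^ 2 + 2) * v ^ 2 + (β ^ 2 + 2 * β + 5) * (t * G * y ^ 2)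
          + (β ^ 2 - 2 * β + 5) * (t * H * z ^ 2) + (β ^ 2 + 3) * ε := by
      linear_combination (β ^ 2 + 3) * hsub - h1
    rw [lt_div_iff₀ htpos]
    clear_value t u v y z w E G H
    nlinarith [hmain, hsub, mul_pos hE (mul_pos hu hu),
      mul_nonneg (sq_nonneg β) (mul_nonneg hE.le (sq_nonneg v)),
      mul_nonneg (mul_nonneg (sq_nonneg (β + 1)) (mul_nonneg htpos.le hG.le)) (sq_nonneg y),
      mul_nonneg (mul_nonneg (sq_nonneg (β - 1)) (mul_nonneg htpos.le hH.le)) (sq_nonneg z),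
      mul_nonneg (sq_nonneg β) hεnn, hεnn,
      mul_nonneg hE.le (sq_nonneg v),
      mul_nonneg (mul_nonneg htpos.le hG.le) (sq_nonneg y),
      mul_nonneg (mul_nonneg htpos.le hH.le) (sq_nonneg z)]
  -- Part 1
  have part1 : ∀ τ ∈ Ico (0:ℝ) b,
      deriv (fun σ => Real.log ((deriv T σ)⁻¹)) τ / deriv T τ > -(1 / T τ) := by
    intro τ hτ
    have htpos : 0 < T τ := lt_of_lt_of_le ht₀ (hrange τ hτ)
    have hu : 0 < deriv T τ := hfuture τ hτ
    have hne : deriv T τ ≠ 0 := hu.ne'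
    have hd2 : HasDerivAt (deriv T) (deriv (deriv T) τ) τ := (hT'diff τ).hasDerivAt
    have hinv : HasDerivAt (fun σ => (deriv T σ)⁻¹)
        (-(deriv (deriv T) τ) / (deriv T τ) ^ 2) τ := hd2.inv hne
    have hlog2 : HasDerivAt (fun σ => Real.log ((deriv T σ)⁻¹))
        (((deriv T τ)⁻¹)⁻¹ * (-(deriv (deriv T) τ) / (deriv T τ) ^ 2)) τ :=
      by have := (Real.hasDerivAt_log (inv_ne_zero hne)).comp τ hinv; exact this
    rw [hlog2.deriv]
    have h2 : deriv (deriv T) τ * T τ < (deriv T τ) ^ 2 := by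
      have := key τ hτ
      rw [lt_div_iff₀ htpos] at this
      linarith
    have heq : ((deriv T τ)⁻¹)⁻¹ * (-(deriv (deriv T) τ) / (deriv T τ) ^ 2) / deriv T τ
        = -(deriv (deriv T) τ / (deriv T τ) ^ 2) := by
      rw [inv_inv]
      field_simp
    rw [heq, gt_iff_lt, neg_lt_neg_iff, div_lt_div_iff₀ (by positivity) htpos]
    nlinarith [h2]
  -- Part 2
  have h0mem : (0:ℝ) ∈ Ico (0:ℝ) b := ⟨le_refl 0, hb⟩
  have hT0pos : 0 < T 0 := lt_of_lt_of_le ht₀ (hrange 0 h0mem)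
  have hK : 0 < deriv T 0 / T 0 := div_pos (hfuture 0 h0mem) hT0pos
  set K : ℝ := deriv T 0 / T 0 with hKdef
  have hasφ : ∀ x ∈ Ico (0:ℝ) b, HasDerivAt (fun σ => deriv T σ / T σ)
      ((deriv (deriv T) x * T x - deriv T x * deriv T x) / (T x) ^ 2) x := by
    intro x hx
    have htpos : 0 < T x := lt_of_lt_of_le ht₀ (hrange x hx)
    exact ((hT'diff x).hasDerivAt).div ((hTdiff x).hasDerivAt) htpos.ne'
  have hanti : AntitoneOn (fun σ => deriv T σ / T σ) (Ico (0:ℝ) b) := by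
    apply antitoneOn_of_deriv_nonpos (convex_Ico 0 b)
    · intro x hx
      exact ((hasφ x hx).continuousAt).continuousWithinAt
    · intro x hx
      rw [interior_Ico] at hx
      exact ((hasφ x (Ioo_subset_Ico_self hx)).differentiableAt).differentiableWithinAt
    · intro x hx
      rw [interior_Ico] at hx
      have hx' : x ∈ Ico (0:ℝ) b := Ioo_subset_Ico_self hx
      rw [(hasφ x hx').deriv]
      have htpos : 0 < T x := lt_of_lt_of_le ht₀ (hrange x hx')
      have h2 : deriv (deriv T) x * T x < (deriv T x) ^ 2 := by
        have := key x hx'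
        rw [lt_div_iff₀ htpos] at this
        linarith
      apply div_nonpos_of_nonpos_of_nonneg
      · nlinarith [h2]
      · positivity
  have hφK : ∀ τ ∈ Ico (0:ℝ) b, deriv T τ / T τ ≤ K :=
    fun τ hτ => hanti h0mem hτ hτ.1
  have hasχ : ∀ x ∈ Ico (0:ℝ) b, HasDerivAt (fun σ => K * σ - Real.log (T σ))
      (K * 1 - (T x)⁻¹ * deriv T x) x := by
    intro x hx
    have htpos : 0 < T x := lt_of_lt_of_le ht₀ (hrange x hx)
    exact ((hasDerivAt_id x).const_mul K).sub
      ((Real.hasDerivAt_log htpos.ne').comp x ((hTdiff x).hasDerivAt))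
  have hmono : MonotoneOn (fun σ => K * σ - Real.log (T σ)) (Ico (0:ℝ) b) := by
    apply monotoneOn_of_deriv_nonneg (convex_Ico 0 b)
    · intro x hx
      exact ((hasχ x hx).continuousAt).continuousWithinAt
    · intro x hx
      rw [interior_Ico] at hx
      exact ((hasχ x (Ioo_subset_Ico_self hx)).differentiableAt).differentiableWithinAt
    · intro x hx
      rw [interior_Ico] at hx
      have hx' : x ∈ Ico (0:ℝ) b := Ioo_subset_Ico_self hx
      rw [(hasχ x hx').deriv]
      have htpos : 0 < T x := lt_of_lt_of_le ht₀ (hrange x hx')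
      have := hφK x hx'
      rw [div_le_iff₀ htpos] at this
      have h3 : (T x)⁻¹ * deriv T x ≤ K := by
        rw [inv_mul_le_iff₀ htpos]
        linarith
      linarith
  have hTmono : StrictMonoOn T (Ico (0:ℝ) b) := by
    apply strictMonoOn_of_deriv_pos (convex_Ico 0 b) hT.continuous.continuousOn
    intro x hx
    rw [interior_Ico] at hx
    exact hfuture x (Ioo_subset_Ico_self hx)
  have part2core : ∀ τ₁ ∈ Ico (0:ℝ) b, ∀ τ₂ ∈ Ico (0:ℝ) b, τ₁ < τ₂ →
      τ₂ > τ₁ + 1 / (2 * K) * Real.log (T τ₂ / T τ₁) := by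
    intro τ₁ hτ₁ τ₂ hτ₂ hlt
    have h1pos : 0 < T τ₁ := lt_of_lt_of_le ht₀ (hrange τ₁ hτ₁)
    have h2pos : 0 < T τ₂ := lt_of_lt_of_le ht₀ (hrange τ₂ hτ₂)
    have hTlt : T τ₁ < T τ₂ := hTmono hτ₁ hτ₂ hlt
    have hL : 0 < Real.log (T τ₂ / T τ₁) :=
      Real.log_pos ((one_lt_div h1pos).mpr hTlt)
    have hmle := hmono hτ₁ hτ₂ hlt.le
    simp only at hmle
    have hlogsub : Real.log (T τ₂ / T τ₁) = Real.log (T τ₂) - Real.log (T τ₁) :=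
      Real.log_div h2pos.ne' h1pos.ne'
    have hKd : Real.log (T τ₂ / T τ₁) ≤ K * (τ₂ - τ₁) := by
      rw [hlogsub]; linarith
    rw [gt_iff_lt, ← sub_pos]
    have hcalc : τ₂ - (τ₁ + 1 / (2 * K) * Real.log (T τ₂ / T τ₁))
        = (τ₂ - τ₁) - Real.log (T τ₂ / T τ₁) / (2 * K) := by ring
    rw [hcalc, sub_pos, div_lt_iff₀ (by positivity)]
    nlinarith [hKd, hL, hK]
  have part2 : ∃ C : ℝ, 0 < C ∧ ∀ τ₁ ∈ Ico (0:ℝ) b, ∀ τ₂ ∈ Ico (0:ℝ) b, τ₁ < τ₂ →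
      τ₂ > τ₁ + C * Real.log (T τ₂ / T τ₁) :=
    ⟨1 / (2 * K), by positivity, part2core⟩
  refine ⟨part1, part2, ?_⟩
  -- Part 3
  intro htend
  set C : ℝ := 1 / (2 * K) with hCdef
  have hC : 0 < C := by positivity
  set M : ℝ := T 0 * Real.exp (b / C) with hM
  have hIoo : Ioo (0:ℝ) b ∈ nhdsWithin b (Iio b) :=
    Ioo_mem_nhdsLT_of_mem ⟨hb, le_refl b⟩
  have hev : ∀ᶠ τ in nhdsWithin b (Iio b), M ≤ T τ := htend.eventually_ge_atTop M
  obtain ⟨τ, hτM, hτIoo⟩ := (hev.and (eventually_of_mem hIoo fun x hx => hx)).exists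
  have hτmem : τ ∈ Ico (0:ℝ) b := ⟨hτIoo.1.le, hτIoo.2⟩
  have hτpos : 0 < T τ := lt_of_lt_of_le ht₀ (hrange τ hτmem)
  have hbig := part2core 0 h0mem τ hτmem hτIoo.1
  have hlogb : C * Real.log (T τ / T 0) < b := by
    have : τ < b := hτIoo.2
    linarith [hbig]
  have hlogb2 : Real.log (T τ / T 0) < b / C := by
    rw [lt_div_iff₀ hC]
    linarith [hlogb]
  have hdivpos : 0 < T τ / T 0 := div_pos hτpos hT0pos
  rw [Real.log_lt_iff_lt_exp hdivpos, div_lt_iff₀ hT0pos] at hlogb2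
  have : T τ < M := by rw [hM]; linarith [hlogb2]
  linarith [hτM]
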